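/- Fix ε ∈ (0, 1/2] and m ≥ 1. For a membership vector d ∈ {0,1}^m, let P_d be the probability distribution on {0,1}^m whose coordinates are independent with the i-th coordinate distributed as Bernoulli(1/2 + ε·d_i/4). If d, d' ∈ {0,1}^m differ in exactly one coordinate, then for every bitarray b ∈ {0,1}^m, e^{−ε} · P_{d'}({b}) ≤ P_d({b}) ≤ e^{ε} · P_{d'}({b}). In other words, the internal state of the conventional pan-private density estimator satisfies ε-differential privacy. -/
import Mathlib


open Finset

/-- The distribution of the internal state (bitarray) of the conventional pan-private
density estimator on membership vector `d ∈ {0,1}^m`: the coordinates are independent and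
the `i`-th coordinate is `Bernoulli(1/2 + ε·d_i/4)`. This is the probability of bitarray `b`. -/
noncomputable def dworkStateProb {m : ℕ} (ε : ℝ) (d b : Fin m → Bool) : ℝ :=
  ∏ i : Fin m,
    (if b i then (1 / 2 + ε * (if d i then (1 : ℝ) else 0) / 4)
     else (1 - (1 / 2 + ε * (if d i then (1 : ℝ) else 0) / 4)))

/-- The internal state of the conventional pan-private density estimator satisfies
`ε`-differential privacy: for `ε ∈ (0, 1/2]`, `m ≥ 1`, and membership vectors `d, d'`
differing in exactly one coordinate, for every bitarray `b`,
`e^{−ε} · P_{d'}({b}) ≤ P_d({b}) ≤ e^{ε} · P_{d'}({b})`. -/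
theorem stmt_4 (ε : ℝ) (hε0 : 0 < ε) (hε1 : ε ≤ 1 / 2) (m : ℕ) (hm : 1 ≤ m)
    (d d' : Fin m → Bool)
    (hadj : ∃ j, d j ≠ d' j ∧ ∀ i, i ≠ j → d i = d' i) (b : Fin m → Bool) :
    Real.exp (-ε) * dworkStateProb ε d' b ≤ dworkStateProb ε d b ∧
      dworkStateProb ε d b ≤ Real.exp ε * dworkStateProb ε d' b := by
  obtain ⟨j, hj, hoth⟩ := hadj
  set f : Fin m → ℝ := fun i =>
    (if b i then (1 / 2 + ε * (if d i then (1 : ℝ) else 0) / 4)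
     else (1 - (1 / 2 + ε * (if d i then (1 : ℝ) else 0) / 4))) with hf
  set g : Fin m → ℝ := fun i =>
    (if b i then (1 / 2 + ε * (if d' i then (1 : ℝ) else 0) / 4)
     else (1 - (1 / 2 + ε * (if d' i then (1 : ℝ) else 0) / 4))) with hg
  have hPd : dworkStateProb ε d b = f j * ∏ i ∈ univ.erase j, f i := by
    rw [dworkStateProb, ← Finset.mul_prod_erase univ f (mem_univ j)]
  have hPd' : dworkStateProb ε d' b = g j * ∏ i ∈ univ.erase j, g i := by
    rw [dworkStateProb, ← Finset.mul_prod_erase univ g (mem_univ j)]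
  have hrest : ∏ i ∈ univ.erase j, f i = ∏ i ∈ univ.erase j, g i := by
    refine Finset.prod_congr rfl fun i hi => ?_
    simp only [hf, hg, hoth i (Finset.mem_erase.mp hi).1]
  have hR : 0 ≤ ∏ i ∈ univ.erase j, g i := by
    refine Finset.prod_nonneg fun i _ => ?_
    simp only [hg]
    rcases b i with _ | _ <;> rcases d' i with _ | _ <;> simp <;> nlinarith
  have hexp : 1 + ε ≤ Real.exp ε := by linarith [Real.add_one_le_exp ε]
  have hexpneg : Real.exp (-ε) * Real.exp ε = 1 := by
    rw [← Real.exp_add]; simp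
  have hexppos : 0 < Real.exp ε := Real.exp_pos ε
  have hexpnegpos : 0 < Real.exp (-ε) := Real.exp_pos _
  have hkey : Real.exp (-ε) * g j ≤ f j ∧ f j ≤ Real.exp ε * g j := by
    cases hb : b j <;> cases hd : d j <;> cases hd' : d' j <;>
      simp only [hf, hg, hb, hd, hd'] <;>
      first
      | exact absurd (hd.trans hd'.symm) hj
      | (simp only [if_true, if_false]; constructor <;> nlinarith)
      | (norm_num; constructor <;> nlinarith)
  rw [hPd, hPd', hrest]
  constructor
  · calc Real.exp (-ε) * (g j * ∏ i ∈ univ.erase j, g i)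
        = (Real.exp (-ε) * g j) * ∏ i ∈ univ.erase j, g i := by ring
    _ ≤ f j * ∏ i ∈ univ.erase j, g i := mul_le_mul_of_nonneg_right hkey.1 hR
  · calc f j * ∏ i ∈ univ.erase j, g i
        ≤ (Real.exp ε * g j) * ∏ i ∈ univ.erase j, g i :=
          mul_le_mul_of_nonneg_right hkey.2 hR
    _ = Real.exp ε * (g j * ∏ i ∈ univ.erase j, g i) := by ring
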